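/- arXiv:2411.02612 — 7 statements merged into one kernel-verified Lean document; each statement's English description precedes it below -/
import Mathlib

section
/- If f : 𝔽₂ⁿ → {0,1} is affine, constant-weighted, and no coordinate is constant on its support, then f is an EO signature: n is even and every vector in the support has Hamming weight n/2. -/
open Finset

/-- Hamming weight of a Boolean vector. -/
def wtB {ι : Type*} [Fintype ι] (a : ι → Bool) : ℕ :=
  (Finset.univ.filter fun i => a i = true).card

/-- Componentwise XOR of three Boolean vectors. -/
def xor3 {ι : Type*} (a b c : ι → Bool) : ι → Bool :=
  fun i => Bool.xor (a i) (Bool.xor (b i) (c i))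

/-- A (support of a) signature is affine if it is nonempty and closed under α⊕β⊕γ. -/
def AffineS {ι : Type*} [Fintype ι] [DecidableEq ι] (S : Finset (ι → Bool)) : Prop :=
  S.Nonempty ∧ ∀ a ∈ S, ∀ b ∈ S, ∀ c ∈ S, xor3 a b c ∈ S

/-!
For every coordinate `i`, pick `a, b` in the support with `a i = 0` and `b i = 1`; then
`x ↦ a ⊕ b ⊕ x` is an involution of the support flipping coordinate `i`, so exactly half of the
support has a `1` at `i`. Counting the ones of all support vectors by coordinates gives
`|S| · n / 2`, while counting them by vectors gives `|S| · w`, hence `n = 2w`.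
-/

lemma xor3_xor3_cancel {ι : Type*} (a b x : ι → Bool) : xor3 a b (xor3 a b x) = x := by
  funext j
  simp only [xor3]
  cases a j <;> cases b j <;> cases x j <;> rfl

section Counting

variable {ι : Type*} {S : Finset (ι → Bool)}

lemma card_filter_apply_true_eq_card_filter_apply_false
    (hS : ∀ a ∈ S, ∀ b ∈ S, ∀ c ∈ S, xor3 a b c ∈ S) {i : ι} {a b : ι → Bool}
    (ha : a ∈ S) (hb : b ∈ S) (hai : a i = false) (hbi : b i = true) :
    #{x ∈ S | x i = true} = #{x ∈ S | x i = false} := by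
  have hflip : ∀ x : ι → Bool, xor3 a b x i = !x i := fun x => by simp [xor3, hai, hbi]
  refine card_bij' (fun x _ => xor3 a b x) (fun x _ => xor3 a b x) ?_ ?_
    (fun x _ => xor3_xor3_cancel a b x) (fun x _ => xor3_xor3_cancel a b x)
  all_goals
    intro x hx
    rw [mem_filter] at hx ⊢
    exact ⟨hS a ha b hb x hx.1, by rw [hflip, hx.2]; rfl⟩

lemma two_mul_card_filter_apply_true
    (hS : ∀ a ∈ S, ∀ b ∈ S, ∀ c ∈ S, xor3 a b c ∈ S) {i : ι} {a b : ι → Bool}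
    (ha : a ∈ S) (hb : b ∈ S) (hai : a i = false) (hbi : b i = true) :
    2 * #{x ∈ S | x i = true} = #S := by
  rw [two_mul]
  nth_rw 2 [card_filter_apply_true_eq_card_filter_apply_false hS ha hb hai hbi]
  simpa using card_filter_add_card_filter_not (s := S) (p := fun x : ι → Bool => x i = true)

variable [Fintype ι]

lemma sum_wtB_eq_sum_card_filter_apply_true (S : Finset (ι → Bool)) :
    ∑ x ∈ S, wtB x = ∑ i, #{x ∈ S | x i = true} := by
  simp only [wtB, card_filter]
  exact sum_comm

lemma two_mul_sum_wtB (hS : ∀ a ∈ S, ∀ b ∈ S, ∀ c ∈ S, xor3 a b c ∈ S)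
    (hnc : ∀ i : ι, (∃ a ∈ S, a i = false) ∧ (∃ b ∈ S, b i = true)) :
    2 * ∑ x ∈ S, wtB x = #S * Fintype.card ι := by
  rw [sum_wtB_eq_sum_card_filter_apply_true, mul_sum]
  calc ∑ i, 2 * #{x ∈ S | x i = true} = ∑ _i : ι, #S := by
        refine sum_congr rfl fun i _ => ?_
        obtain ⟨⟨a, ha, hai⟩, ⟨b, hb, hbi⟩⟩ := hnc i
        exact two_mul_card_filter_apply_true hS ha hb hai hbi
    _ = #S * Fintype.card ι := by rw [sum_const, card_univ, smul_eq_mul, mul_comm]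

end Counting

theorem stmt1 {n : ℕ} (S : Finset (Fin n → Bool))
    (hA : AffineS S)
    (hcw : ∃ w, ∀ a ∈ S, wtB a = w)
    (hnc : ∀ i : Fin n, (∃ a ∈ S, a i = false) ∧ (∃ b ∈ S, b i = true)) :
    ∃ m : ℕ, n = 2 * m ∧ ∀ a ∈ S, wtB a = m := by
  obtain ⟨hne, hS⟩ := hA
  obtain ⟨w, hw⟩ := hcw
  have hsum : ∑ x ∈ S, wtB x = #S * w := by rw [sum_congr rfl hw, sum_const, smul_eq_mul]
  have hcount := two_mul_sum_wtB hS hnc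
  rw [hsum, Fintype.card_fin] at hcount
  refine ⟨w, Nat.eq_of_mul_eq_mul_left hne.card_pos ?_, hw⟩
  rw [← hcount]
  ring
end

section
/- Every affine EO signature is pairwise opposite: if f : 𝔽₂^{2n} → {0,1} is affine and every support vector has Hamming weight n, then the 2n variables can be partitioned into n pairs such that in every support vector, the two variables of each pair take opposite values. -/
open Finset

/-!
For a coordinate `i`, let `A i` (`sameCoords S i`) be the coordinates agreeing with `i` on all of
`S` and `B i` (`oppCoords S i`) those opposite to `i` on all of `S`. Sum the signs
`(-1)^(a i + a j)` over `a ∈ S` and all coordinates `j`. Each `a` contributes `0` because it has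
weight `n`. A coordinate `j` outside `A i ∪ B i` contributes `0` too: if `b ∈ S` separates `i`
and `j` and `c ∈ S` does not, then `a ↦ a ⊕ b ⊕ c` is a sign-reversing involution of the affine
support `S`. Hence `|S| (|A i| - |B i|) = 0`, so `|A i| = |B i|`. Passing from `i` to any
`k ∈ B i` swaps `A` and `B`, so matching the `r`-th smallest element of `A i` with the `r`-th
smallest element of `B i` is a consistent, fixed-point-free involution.
-/

section Pairing

variable {ι : Type*} [LinearOrder ι]

/-- Sends the `r`-th smallest element of `s` to the `r`-th smallest element of `t`. -/
def rankMatch (s t : Finset ι) (i : ι) : ι :=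
  (t.sort (· ≤ ·)).getD ((s.sort (· ≤ ·)).idxOf i) i

lemma rankMatch_mem {s t : Finset ι} (hst : s.card = t.card) {i : ι} (hi : i ∈ s) :
    rankMatch s t i ∈ t := by
  have hr : (s.sort (· ≤ ·)).idxOf i < (t.sort (· ≤ ·)).length := by
    rw [Finset.length_sort, ← hst, ← Finset.length_sort (· ≤ ·)]
    exact List.idxOf_lt_length_iff.2 ((Finset.mem_sort _).2 hi)
  rw [rankMatch, List.getD_eq_getElem _ _ hr]
  exact (Finset.mem_sort _).1 (List.getElem_mem hr)

lemma rankMatch_rankMatch {s t : Finset ι} (hst : s.card = t.card) {i : ι} (hi : i ∈ s) :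
    rankMatch t s (rankMatch s t i) = i := by
  have hs : (s.sort (· ≤ ·)).idxOf i < (s.sort (· ≤ ·)).length :=
    List.idxOf_lt_length_iff.2 ((Finset.mem_sort _).2 hi)
  have ht : (s.sort (· ≤ ·)).idxOf i < (t.sort (· ≤ ·)).length := by
    rwa [Finset.length_sort, ← hst, ← Finset.length_sort (· ≤ ·)]
  have hget : rankMatch s t i = (t.sort (· ≤ ·))[(s.sort (· ≤ ·)).idxOf i] := by
    rw [rankMatch, List.getD_eq_getElem _ _ ht]
  rw [hget, rankMatch, List.Nodup.idxOf_getElem (Finset.sort_nodup t _),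
    List.getD_eq_getElem _ _ hs]
  exact List.getElem_idxOf hs

theorem exists_involutive_mem_of_card_eq (A B : ι → Finset ι) (hmem : ∀ i, i ∈ A i)
    (hswap : ∀ i, ∀ k ∈ B i, A k = B i ∧ B k = A i) (hcard : ∀ i, (A i).card = (B i).card) :
    ∃ p : ι → ι, Function.Involutive p ∧ ∀ i, p i ∈ B i := by
  have hpB : ∀ i, rankMatch (A i) (B i) i ∈ B i := fun i => rankMatch_mem (hcard i) (hmem i)
  refine ⟨fun i => rankMatch (A i) (B i) i, fun i => ?_, hpB⟩
  obtain ⟨hA, hB⟩ := hswap i _ (hpB i)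
  simp only [hA, hB]
  exact rankMatch_rankMatch (hcard i) (hmem i)

end Pairing

lemma sum_sign_eq_zero_of_two_mul_wtB {ι : Type*} [Fintype ι] {a : ι → Bool}
    (ha : 2 * wtB a = Fintype.card ι) (x : Bool) : ∑ j, (if a j = x then 1 else -1 : ℤ) = 0 := by
  have htf := Finset.card_filter_add_card_filter_not (s := univ) (p := fun j => a j = true)
  rw [Finset.sum_ite, Finset.sum_const, Finset.sum_const]
  simp only [wtB, card_univ] at ha htf
  cases x <;> simp only [Bool.not_eq_true, Bool.not_eq_false] at htf ⊢ <;>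
    simp only [nsmul_eq_mul, mul_one, mul_neg] <;> omega

section Correlation

variable {ι : Type*} [Fintype ι] (S : Finset (ι → Bool))

def sameCoords (i : ι) : Finset ι := univ.filter fun j => ∀ a ∈ S, a j = a i

def oppCoords (i : ι) : Finset ι := univ.filter fun j => ∀ a ∈ S, a j = !a i

def coordCorr (i j : ι) : ℤ := ∑ a ∈ S, if a j = a i then 1 else -1

variable {S}

lemma mem_sameCoords {i j : ι} : j ∈ sameCoords S i ↔ ∀ a ∈ S, a j = a i := by
  simp [sameCoords]

lemma mem_oppCoords {i j : ι} : j ∈ oppCoords S i ↔ ∀ a ∈ S, a j = !a i := by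
  simp [oppCoords]

lemma self_mem_sameCoords (i : ι) : i ∈ sameCoords S i :=
  mem_sameCoords.2 fun _ _ => rfl

lemma notMem_oppCoords_of_mem_sameCoords (hS : S.Nonempty) {i j : ι}
    (hj : j ∈ sameCoords S i) : j ∉ oppCoords S i := fun hj' => by
  obtain ⟨a, ha⟩ := hS
  have := (mem_sameCoords.1 hj a ha).symm.trans (mem_oppCoords.1 hj' a ha)
  cases h : a i <;> simp [h] at this

lemma sameCoords_eq_and_oppCoords_eq_of_mem_oppCoords {i k : ι} (hk : k ∈ oppCoords S i) :
    sameCoords S k = oppCoords S i ∧ oppCoords S k = sameCoords S i := by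
  have hk := mem_oppCoords.1 hk
  constructor <;> ext j <;> simp only [mem_sameCoords, mem_oppCoords] <;>
    exact forall₂_congr fun a ha => by simp only [hk a ha, Bool.not_not]

lemma coordCorr_eq_zero (hS : ∀ a ∈ S, ∀ b ∈ S, ∀ c ∈ S, xor3 a b c ∈ S) {i j : ι}
    (hsame : j ∉ sameCoords S i) (hopp : j ∉ oppCoords S i) : coordCorr S i j = 0 := by
  simp only [mem_sameCoords, mem_oppCoords, not_forall] at hsame hopp
  obtain ⟨b, hb, hbij⟩ := hsame
  obtain ⟨c, hc, hcij⟩ := hopp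
  have hc' : c j = c i := by cases h : c i <;> simp_all
  have hflip : ∀ a : ι → Bool, (xor3 a b c j = xor3 a b c i ↔ ¬ a j = a i) := by
    have key : ∀ x y u v w : Bool, ¬ v = u → (xor y (xor v w) = xor x (xor u w) ↔ ¬ y = x) := by
      decide
    intro a
    simpa only [xor3, hc'] using key (a i) (a j) (b i) (b j) (c i) hbij
  refine Finset.sum_involution (fun a _ => xor3 a b c) (fun a _ => ?_) (fun a _ _ hfix => ?_)
    (fun a ha => hS a ha b hb c hc) (fun a _ => ?_)
  · by_cases h : a j = a i
    · rw [if_pos h, if_neg ((hflip a).not.2 (not_not.2 h))]; ring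
    · rw [if_neg h, if_pos ((hflip a).2 h)]; ring
  · exact iff_not_self (by simpa only [hfix] using hflip a)
  · funext k
    simp only [xor3]
    cases a k <;> cases b k <;> cases c k <;> rfl

lemma sum_coordCorr_eq_zero (hEO : ∀ a ∈ S, 2 * wtB a = Fintype.card ι) (i : ι) :
    ∑ j, coordCorr S i j = 0 := by
  simp only [coordCorr]
  rw [Finset.sum_comm]
  exact Finset.sum_eq_zero fun a ha => sum_sign_eq_zero_of_two_mul_wtB (hEO a ha) (a i)

theorem card_sameCoords_eq_card_oppCoords [DecidableEq ι] (hA : AffineS S)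
    (hEO : ∀ a ∈ S, 2 * wtB a = Fintype.card ι) (i : ι) :
    (sameCoords S i).card = (oppCoords S i).card := by
  have hcorr : ∀ j, coordCorr S i j = S.card *
      ((if j ∈ sameCoords S i then 1 else 0) - (if j ∈ oppCoords S i then 1 else 0)) := by
    intro j
    by_cases hs : j ∈ sameCoords S i
    · rw [if_pos hs, if_neg (notMem_oppCoords_of_mem_sameCoords hA.1 hs), coordCorr,
        Finset.sum_congr rfl fun a ha => if_pos (mem_sameCoords.1 hs a ha)]
      simp
    by_cases ho : j ∈ oppCoords S i
    · rw [if_neg hs, if_pos ho, coordCorr, Finset.sum_congr rfl fun a ha =>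
        if_neg (by rw [mem_oppCoords.1 ho a ha]; exact Bool.not_ne_self _)]
      simp
    · rw [if_neg hs, if_neg ho, coordCorr_eq_zero hA.2 hs ho]
      simp
  have htot := sum_coordCorr_eq_zero hEO i
  simp only [hcorr, ← Finset.mul_sum, Finset.sum_sub_distrib, Finset.sum_boole,
    Finset.filter_mem_eq_inter, Finset.univ_inter] at htot
  have hSpos : (S.card : ℤ) ≠ 0 := by exact_mod_cast hA.1.card_pos.ne'
  exact_mod_cast sub_eq_zero.1 ((mul_eq_zero.1 htot).resolve_left hSpos)

end Correlation

theorem stmt2 {n : ℕ} (S : Finset (Fin (2 * n) → Bool))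
    (hA : AffineS S)
    (hEO : ∀ a ∈ S, wtB a = n) :
    ∃ p : Fin (2 * n) → Fin (2 * n), Function.Involutive p ∧ (∀ i, p i ≠ i) ∧
      ∀ a ∈ S, ∀ i, a (p i) = !(a i) := by
  have hbal : ∀ a ∈ S, 2 * wtB a = Fintype.card (Fin (2 * n)) := fun a ha => by
    rw [hEO a ha, Fintype.card_fin]
  obtain ⟨p, hp, hpB⟩ := exists_involutive_mem_of_card_eq (sameCoords S) (oppCoords S)
    self_mem_sameCoords (fun _ _ => sameCoords_eq_and_oppCoords_eq_of_mem_oppCoords)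
    (card_sameCoords_eq_card_oppCoords hA hbal)
  refine ⟨p, hp, fun i hi => ?_, fun a ha i => mem_oppCoords.1 (hpB i) a ha⟩
  have hii : i ∈ oppCoords S i := by simpa only [hi] using hpB i
  exact notMem_oppCoords_of_mem_sameCoords hA.1 (self_mem_sameCoords i) hii
end

section
/- Let f = δ₁^{⊗m} ⊗ h be a δ₁-affine kernel (m ≥ 1, h of positive arity, no coordinate of h constant, and every 0-pinning of h affine) with |S(f)| > 3. Let k₁ be such that column 1 of S(h) contains 2^{k₁} zeros, assumed maximal over all columns, and let l = #₁¹(h) be the number of ones in column 1. Then 2^{k₁−1} < l < 2^{k₁}. -/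
open Finset

/-- Pinning variable `i` of a signature to the value `a`. -/
def pinS {ι : Type*} [Fintype ι] [DecidableEq ι] (S : Finset (ι → Bool)) (i : ι) (a : Bool) :
    Finset ({j : ι // j ≠ i} → Bool) :=
  (S.filter fun x => x i = a).image fun x j => x j.1

/-- An EO signature: every support vector has Hamming weight equal to half the arity. -/
def IsEOS {ι : Type*} [Fintype ι] (S : Finset (ι → Bool)) : Prop :=
  ∀ a ∈ S, 2 * wtB a = Fintype.card ι

/-- `S` is a δ₁-affine kernel with set `T` of δ₁-coordinates:
`S = δ₁^{⊗|T|} ⊗ h` where `h` (the restriction of `S` to the coordinates outside `T`)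
has positive arity, no constant coordinate, and every 0-pinning of `h` is affine
(pinning a coordinate `i ∉ T` of `S` to 0 is `δ₁^{⊗|T|} ⊗ h_i^0`, which is affine
iff `h_i^0` is affine). -/
def IsKernelWith {ι : Type*} [Fintype ι] [DecidableEq ι]
    (S : Finset (ι → Bool)) (T : Finset ι) : Prop :=
  S.Nonempty ∧ IsEOS S ∧ T.Nonempty ∧ T ≠ Finset.univ ∧
  (∀ i ∈ T, ∀ x ∈ S, x i = true) ∧
  (∀ i ∉ T, (∃ x ∈ S, x i = false) ∧ (∃ x ∈ S, x i = true)) ∧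
  (∀ i ∉ T, AffineS (pinS S i false))

/-!
The zeros of column `i₀` form an affine set `S⁰` of size `2^k₁`. Suppose at most `2^(k₁-1)` vectors
have a one at `i₀`. On a column `j ∉ T` where `S⁰` is not constant, `S⁰` has `2^(k₁-1)` zeros and
the other vectors between `1` and `2^(k₁-1)`; the zeros of column `j` form an affine set, so their
number is a power of two, hence `2^k₁`, and every other vector vanishes at `j`. Two EO vectors
sharing a `1` share a `0`, which gives such a column `i` (maximality of `k₁` makes `S⁰`
non-constant there), so there are exactly `2^(k₁-1) ≥ 2` other vectors `a ≠ a'`. Closure of the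
pinning at `i` puts `a ⊕ a' ⊕ x` in `S⁰` for `x ∈ S⁰` vanishing at `i`, so `S⁰` is non-constant on a
column where `a` and `a'` differ, and both would vanish there.

The upper bound is double counting: `|S| · N = 2 ∑ᵢ #ᵢ⁰ ≤ 2 (N - 1) 2^k₁`.
-/

def XorClosed {ι : Type*} (S : Finset (ι → Bool)) : Prop :=
  ∀ a ∈ S, ∀ b ∈ S, ∀ c ∈ S, xor3 a b c ∈ S

section Xor

variable {ι : Type*}

lemma xor3_apply_of_left_eq {a b : ι → Bool} {i : ι} (c : ι → Bool) (h : a i = b i) :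
    xor3 a b c i = c i := by
  simp [xor3, h]

lemma xor3_apply_of_left_ne {a b : ι → Bool} {i : ι} (c : ι → Bool) (h : a i ≠ b i) :
    xor3 a b c i = !c i := by
  revert h; simp only [xor3]; cases a i <;> cases b i <;> cases c i <;> decide

lemma xor3_xor3 (a b c : ι → Bool) : xor3 a b (xor3 a b c) = c := by
  funext i; simp only [xor3]; cases a i <;> cases b i <;> cases c i <;> rfl

variable {S : Finset (ι → Bool)}

lemma XorClosed.filter (hS : XorClosed S) (i : ι) (v : Bool) :
    XorClosed (S.filter fun x => x i = v) := by
  intro a ha b hb c hc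
  simp only [mem_filter] at ha hb hc ⊢
  exact ⟨hS a ha.1 b hb.1 c hc.1, by rw [xor3_apply_of_left_eq c (ha.2.trans hb.2.symm), hc.2]⟩

lemma XorClosed.of_pinS [Fintype ι] [DecidableEq ι] {i : ι} {v : Bool}
    (h : XorClosed (pinS S i v)) : XorClosed (S.filter fun x => x i = v) := by
  intro a ha b hb c hc
  have restrict_mem : ∀ x ∈ S.filter fun x => x i = v,
      (fun j : {j // j ≠ i} => x j) ∈ pinS S i v := fun x hx => mem_image_of_mem _ hx
  obtain ⟨y, hy, hya⟩ :=
    mem_image.1 (h _ (restrict_mem a ha) _ (restrict_mem b hb) _ (restrict_mem c hc))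
  simp only [mem_filter] at ha hb hc hy ⊢
  have hxi : xor3 a b c i = v := by rw [xor3_apply_of_left_eq c (ha.2.trans hb.2.symm), hc.2]
  have hyx : y = xor3 a b c := by
    funext j
    by_cases hj : j = i
    · rw [hj, hy.2, hxi]
    · exact congrFun hya ⟨j, hj⟩
  exact hyx ▸ hy

lemma card_filter_false_add_card_filter_true (S : Finset (ι → Bool)) (i : ι) :
    (S.filter fun x => x i = false).card + (S.filter fun x => x i = true).card = S.card := by
  simpa only [Bool.not_eq_false] using
    card_filter_add_card_filter_not (s := S) (fun x => x i = false)

lemma card_filter_eq_add (S : Finset (ι → Bool)) (i : ι) (p : (ι → Bool) → Prop)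
    [DecidablePred p] :
    (S.filter p).card = ((S.filter fun x => x i = false).filter p).card +
      ((S.filter fun x => x i = true).filter p).card := by
  rw [← card_filter_false_add_card_filter_true (S.filter p) i, filter_comm, filter_comm p]

/-- `x ↦ p ⊕ q ⊕ x` swaps the two halves of column `i`. -/
lemma XorClosed.two_mul_card_filter (hS : XorClosed S) {p q : ι → Bool} (hp : p ∈ S)
    (hq : q ∈ S) {i : ι} (hpq : p i ≠ q i) (v : Bool) :
    2 * (S.filter fun x => x i = v).card = S.card := by
  have hswap : (S.filter fun x => x i = v).card = (S.filter fun x => x i = !v).card := by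
    refine card_nbij' (xor3 p q) (xor3 p q) ?_ ?_ (fun x _ => xor3_xor3 p q x)
      (fun x _ => xor3_xor3 p q x) <;>
    · intro x hx
      simp only [coe_filter, Set.mem_ofPred_eq] at hx ⊢
      refine ⟨hS p hp q hq x hx.1, ?_⟩
      simp [xor3_apply_of_left_ne x hpq, hx.2]
  have hsplit := card_filter_false_add_card_filter_true S i
  cases v <;> simp only [Bool.not_false, Bool.not_true] at hswap <;> omega

/-- Halving along a non-constant column keeps the set nonempty and xor-closed. -/
lemma XorClosed.exists_card_eq_two_pow (hS : XorClosed S) (hne : S.Nonempty) :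
    ∃ k, S.card = 2 ^ k := by
  induction hn : S.card using Nat.strong_induction_on generalizing S with
  | _ n ih =>
  obtain hle | hlt := le_or_gt S.card 1
  · exact ⟨0, by have := hne.card_pos; omega⟩
  obtain ⟨p, hp, q, hq, hpq⟩ := one_lt_card.1 hlt
  obtain ⟨i, hi⟩ := Function.ne_iff.1 hpq
  have hhalf := hS.two_mul_card_filter hp hq hi (p i)
  obtain ⟨k, hk⟩ := ih _ (by omega) (hS.filter i (p i)) ⟨p, mem_filter.2 ⟨hp, rfl⟩⟩ rfl
  exact ⟨k + 1, by rw [pow_succ]; omega⟩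

end Xor

section EO

variable {ι : Type*} [Fintype ι] {S : Finset (ι → Bool)}

lemma IsEOS.two_mul_card_filter_false (hS : IsEOS S) {x : ι → Bool} (hx : x ∈ S) :
    2 * (univ.filter fun i => x i = false).card = Fintype.card ι := by
  have hsplit := card_filter_add_card_filter_not (s := univ) (fun i => x i = true)
  simp only [Bool.not_eq_true, card_univ] at hsplit
  have := hS x hx
  unfold wtB at this
  omega

lemma IsEOS.exists_eq_false_and_eq_false (hS : IsEOS S) {x y : ι → Bool} (hx : x ∈ S)
    (hy : y ∈ S) {t : ι} (hxt : x t = true) (hyt : y t = true) :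
    ∃ i, x i = false ∧ y i = false := by
  classical
  by_contra! h
  have hdisj : Disjoint (univ.filter fun i => x i = false) (univ.filter fun i => y i = false) :=
    disjoint_filter.2 fun i _ hxi => by simpa using h i hxi
  have hsub : (univ.filter fun i => x i = false) ∪ (univ.filter fun i => y i = false) ⊆
      univ.erase t := by
    intro i hi
    simp only [mem_union, mem_filter, mem_univ, true_and] at hi
    exact mem_erase.2 ⟨by rintro rfl; rcases hi with h | h <;> simp_all, mem_univ i⟩
  have hcard := card_le_card hsub
  rw [card_union_of_disjoint hdisj, card_erase_of_mem (mem_univ t), card_univ] at hcard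
  have := hS.two_mul_card_filter_false hx
  have := hS.two_mul_card_filter_false hy
  have := Fintype.card_pos_iff.2 ⟨t⟩
  omega

lemma IsEOS.card_mul_card_eq (hS : IsEOS S) :
    S.card * Fintype.card ι = 2 * ∑ i, (S.filter fun x => x i = false).card := by
  simp only [card_filter]
  rw [sum_comm, mul_sum]
  simp only [← card_filter]
  rw [sum_congr rfl fun x hx => hS.two_mul_card_filter_false hx, sum_const, smul_eq_mul]

lemma IsEOS.card_lt_two_mul (hS : IsEOS S) {t : ι} (ht : ∀ x ∈ S, x t = true) {M : ℕ}
    (hM : 0 < M) (hle : ∀ i, (S.filter fun x => x i = false).card ≤ M) :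
    S.card < 2 * M := by
  classical
  have hzero : (S.filter fun x => x t = false).card = 0 :=
    card_eq_zero.2 (filter_eq_empty_iff.2 fun x hx => by simp [ht x hx])
  have hsum : ∑ i, (S.filter fun x => x i = false).card ≤ (Fintype.card ι - 1) * M := by
    rw [← sum_erase univ (f := fun i => (S.filter fun x => x i = false).card) hzero]
    simpa [card_erase_of_mem] using sum_le_card_nsmul (univ.erase t) _ M fun i _ => hle i
  have hn := Fintype.card_pos_iff.2 ⟨t⟩
  have hmul : S.card * Fintype.card ι < 2 * M * Fintype.card ι := by
    rw [hS.card_mul_card_eq]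
    calc 2 * ∑ i, (S.filter fun x => x i = false).card ≤ 2 * ((Fintype.card ι - 1) * M) := by
          omega
      _ < 2 * M * Fintype.card ι := by
          rw [mul_comm (Fintype.card ι - 1), ← mul_assoc]
          exact Nat.mul_lt_mul_of_pos_left (by omega) (by omega)
  exact Nat.lt_of_mul_lt_mul_right hmul

end EO

lemma two_le_of_three_lt_two_pow_add {k l : ℕ} (h : 3 < 2 ^ k + l) (hl : l ≤ 2 ^ (k - 1)) :
    2 ≤ k := by
  by_contra! hk
  interval_cases k <;> simp at hl h <;> omega

lemma eq_two_pow_pred_of_two_pow_eq_add {k e u t : ℕ} (hk : 1 ≤ k) (hu : 2 * u = 2 ^ k)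
    (he : 2 ^ e = u + t) (ht : 0 < t) (htk : t ≤ 2 ^ (k - 1)) : t = 2 ^ (k - 1) := by
  have hk' : 2 ^ k = 2 * 2 ^ (k - 1) := by rw [← pow_succ']; congr 1; omega
  have hke : k - 1 < e := (Nat.pow_lt_pow_iff_right one_lt_two).1 (by omega)
  have := Nat.pow_le_pow_right two_pos (show k ≤ e by omega)
  omega

section Kernel

variable {ι : Type*} {S : Finset (ι → Bool)} {i₀ : ι} {k : ℕ}

/-- Column `j` has `2^(k-1)` zeros in `S⁰ = {x ∈ S | x i₀ = 0}` and between `1` and `2^(k-1)`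
outside it; being a power of two, the total is `2^k`. -/
lemma card_filter_true_eq_and_forall_eq_false (hk : 1 ≤ k)
    (hclosed : ∀ j, XorClosed (S.filter fun x => x j = false))
    (hk₁ : (S.filter fun x => x i₀ = false).card = 2 ^ k)
    (hl : (S.filter fun x => x i₀ = true).card ≤ 2 ^ (k - 1)) {j : ι} {p q : ι → Bool}
    (hp : p ∈ S.filter fun x => x i₀ = false) (hq : q ∈ S.filter fun x => x i₀ = false)
    (hpq : p j ≠ q j) {y : ι → Bool} (hy : y ∈ S.filter fun x => x i₀ = true)
    (hyj : y j = false) :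
    (S.filter fun x => x i₀ = true).card = 2 ^ (k - 1) ∧
      ∀ x ∈ S.filter (fun x => x i₀ = true), x j = false := by
  have hu := hk₁ ▸ (hclosed i₀).two_mul_card_filter hp hq hpq false
  obtain ⟨e, he⟩ :=
    (hclosed j).exists_card_eq_two_pow ⟨y, mem_filter.2 ⟨(mem_filter.1 hy).1, hyj⟩⟩
  rw [card_filter_eq_add S i₀] at he
  have ht : 0 < ((S.filter fun x => x i₀ = true).filter fun x => x j = false).card :=
    card_pos.2 ⟨y, mem_filter.2 ⟨hy, hyj⟩⟩
  have hts := card_filter_le (S.filter fun x => x i₀ = true) fun x => x j = false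
  have hteq := eq_two_pow_pred_of_two_pow_eq_add hk hu he.symm ht (hts.trans hl)
  exact ⟨le_antisymm hl (hteq ▸ hts), card_filter_eq_iff.1 (by omega)⟩

/-- For `a ≠ a'` outside `S⁰`, the vector `a ⊕ a' ⊕ x` lies in `S⁰` and differs from `x` wherever
`a` and `a'` differ; the previous lemma then makes both vanish there. -/
lemma not_forall_eq_false_of_one_lt_card (hk : 1 ≤ k)
    (hclosed : ∀ j, XorClosed (S.filter fun x => x j = false))
    (hk₁ : (S.filter fun x => x i₀ = false).card = 2 ^ k)
    (hl : (S.filter fun x => x i₀ = true).card ≤ 2 ^ (k - 1))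
    (h2 : 1 < (S.filter fun x => x i₀ = true).card) {i : ι} {x : ι → Bool}
    (hx : x ∈ S.filter fun x => x i₀ = false) (hxi : x i = false) :
    ¬ ∀ y ∈ S.filter (fun x => x i₀ = true), y i = false := by
  intro hzero
  obtain ⟨a, ha, a', ha', haa'⟩ := one_lt_card.1 h2
  obtain ⟨j, hj⟩ := Function.ne_iff.1 haa'
  have hzero_mem : ∀ z ∈ S.filter (fun x => x i₀ = true), z ∈ S.filter fun x => x i = false :=
    fun z hz => mem_filter.2 ⟨(mem_filter.1 hz).1, hzero z hz⟩
  have hc : xor3 a a' x ∈ S.filter fun x => x i₀ = false := by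
    refine mem_filter.2 ⟨(mem_filter.1 (hclosed i a (hzero_mem a ha) a' (hzero_mem a' ha') x
      (mem_filter.2 ⟨(mem_filter.1 hx).1, hxi⟩))).1, ?_⟩
    rw [xor3_apply_of_left_eq x ((mem_filter.1 ha).2.trans (mem_filter.1 ha').2.symm)]
    exact (mem_filter.1 hx).2
  have hb : ∃ b ∈ S.filter (fun x => x i₀ = true), b j = false := by
    by_cases h : a j = false
    · exact ⟨a, ha, h⟩
    · exact ⟨a', ha', by simp_all⟩
  obtain ⟨b, hb, hbj⟩ := hb
  obtain ⟨-, hzero'⟩ := card_filter_true_eq_and_forall_eq_false hk hclosed hk₁ hl hx hc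
    (by simp [xor3_apply_of_left_ne x hj]) hb hbj
  exact hj ((hzero' a ha).trans (hzero' a' ha').symm)

lemma exists_mem_filter_eq_true_of_card_filter_le {i : ι}
    (hle : (S.filter fun x => x i = false).card ≤ (S.filter fun x => x i₀ = false).card)
    {y : ι → Bool} (hy : y ∈ S) (hyi₀ : y i₀ = true) (hyi : y i = false) :
    ∃ q ∈ S.filter (fun x => x i₀ = false), q i = true := by
  by_contra! h
  have hsub : S.filter (fun x => x i₀ = false) ⊂ S.filter fun x => x i = false := by
    refine ssubset_iff_of_subset (fun x hx => ?_) |>.2 ⟨y, ?_, ?_⟩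
    · exact mem_filter.2 ⟨(mem_filter.1 hx).1, by simpa using h x hx⟩
    · exact mem_filter.2 ⟨hy, hyi⟩
    · simp [hyi₀]
  exact (card_lt_card hsub).not_ge hle

lemma filter_eq_false_eq_empty {i : ι} (h : ∀ x ∈ S, x i = true) :
    S.filter (fun x => x i = false) = ∅ :=
  filter_eq_empty_iff.2 fun x hx => by simp [h x hx]

variable [Fintype ι] [DecidableEq ι] {T : Finset ι}

lemma IsKernelWith.xorClosed_filter_false (hK : IsKernelWith S T) (j : ι) :
    XorClosed (S.filter fun x => x j = false) := by
  obtain ⟨-, -, -, -, hT1, -, haff⟩ := hK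
  by_cases hj : j ∈ T
  · simp [filter_eq_false_eq_empty (hT1 j hj), XorClosed]
  · exact XorClosed.of_pinS (haff j hj).2

theorem IsKernelWith.two_pow_pred_lt_card_filter_true (hK : IsKernelWith S T)
    (hcard : 3 < S.card) (hi₀ : i₀ ∉ T) (hk₁ : (S.filter fun x => x i₀ = false).card = 2 ^ k)
    (hmax : ∀ i ∉ T, (S.filter fun x => x i = false).card ≤ 2 ^ k) :
    2 ^ (k - 1) < (S.filter fun x => x i₀ = true).card := by
  have hclosed := hK.xorClosed_filter_false
  obtain ⟨-, hEO, ⟨t, ht⟩, -, hT1, hnc, -⟩ := hK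
  by_contra! hl
  have hk : 2 ≤ k := two_le_of_three_lt_two_pow_add
    (by rwa [← hk₁, card_filter_false_add_card_filter_true]) hl
  obtain ⟨x, hxS, hxi₀⟩ := (hnc i₀ hi₀).1
  obtain ⟨y, hyS, hyi₀⟩ := (hnc i₀ hi₀).2
  have hx : x ∈ S.filter fun x => x i₀ = false := mem_filter.2 ⟨hxS, hxi₀⟩
  obtain ⟨i, hxi, hyi⟩ :=
    hEO.exists_eq_false_and_eq_false hxS hyS (hT1 t ht x hxS) (hT1 t ht y hyS)
  have hiT : i ∉ T := fun hi => by simp [hT1 i hi x hxS] at hxi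
  obtain ⟨q, hq, hqi⟩ :=
    exists_mem_filter_eq_true_of_card_filter_le (hk₁ ▸ hmax i hiT) hyS hyi₀ hyi
  obtain ⟨hl', hzero⟩ := card_filter_true_eq_and_forall_eq_false (by omega) hclosed hk₁ hl hx hq
    (by simp [hxi, hqi]) (mem_filter.2 ⟨hyS, hyi₀⟩) hyi
  exact not_forall_eq_false_of_one_lt_card (by omega) hclosed hk₁ hl
    (hl' ▸ Nat.one_lt_two_pow (by omega)) hx hxi hzero

theorem IsKernelWith.card_filter_true_lt (hK : IsKernelWith S T)
    (hk₁ : (S.filter fun x => x i₀ = false).card = 2 ^ k)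
    (hmax : ∀ i ∉ T, (S.filter fun x => x i = false).card ≤ 2 ^ k) :
    (S.filter fun x => x i₀ = true).card < 2 ^ k := by
  obtain ⟨-, hEO, ⟨t, ht⟩, -, hT1, -, -⟩ := hK
  have hle : ∀ i, (S.filter fun x => x i = false).card ≤ 2 ^ k := fun i => by
    by_cases hi : i ∈ T
    · simp [filter_eq_false_eq_empty (hT1 i hi)]
    · exact hmax i hi
  have hlt := hEO.card_lt_two_mul (hT1 t ht) (Nat.two_pow_pos k) hle
  have := card_filter_false_add_card_filter_true S i₀
  omega

end Kernel

theorem stmt6 {N : ℕ} (S : Finset (Fin N → Bool)) (T : Finset (Fin N))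
    (hK : IsKernelWith S T) (hcard : 3 < S.card)
    (i₀ : Fin N) (hi₀ : i₀ ∉ T) (k₁ : ℕ)
    (hk₁ : (S.filter fun x => x i₀ = false).card = 2 ^ k₁)
    (hmax : ∀ i ∉ T, (S.filter fun x => x i = false).card ≤ 2 ^ k₁) :
    2 ^ (k₁ - 1) < (S.filter fun x => x i₀ = true).card ∧
      (S.filter fun x => x i₀ = true).card < 2 ^ k₁ :=
  ⟨hK.two_pow_pred_lt_card_filter_true hcard hi₀ hk₁ hmax, hK.card_filter_true_lt hk₁ hmax⟩
end

section
/- If f is a basic δ₁-affine kernel (a δ₁-affine kernel with exactly one δ₁ factor, i.e., f = δ₁ ⊗ h with δ₀, δ₁ ∤ h) of arity 2^k, then for every positive integer m, the m-multiple f_{×m} is a δ₁-affine kernel of arity m·2^k. -/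
open Finset

/-- The m-multiple of a signature. -/
def multS {ι : Type*} [Fintype ι] [DecidableEq ι] (m : ℕ) (S : Finset (ι → Bool)) :
    Finset (Fin m × ι → Bool) :=
  S.image fun a p => a p.2

/-! Taking the `m`-multiple replaces each coordinate `i` by the `m` copies `(j, i)`: weights get
multiplied by `m`, a coordinate of the multiple is constant (resp. a 0-pinning closed under `xor3`)
exactly when the coordinate of `S` it copies is, so the δ₁-coordinates become `univ ×ˢ T`. -/

section Multiple

lemma comp_snd_injective {κ ι : Type*} [Nonempty κ] :
    Function.Injective fun (a : ι → Bool) (p : κ × ι) => a p.2 :=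
  fun _ _ h => funext fun i => congrFun h (Classical.arbitrary κ, i)

lemma xor3_comp_snd {κ ι : Type*} (a b c : ι → Bool) :
    xor3 (fun p : κ × ι => a p.2) (fun p => b p.2) (fun p => c p.2) = fun p => xor3 a b c p.2 :=
  rfl

variable {ι : Type*} [Fintype ι]

lemma wtB_comp_snd {κ : Type*} [Fintype κ] (a : ι → Bool) :
    wtB (fun p : κ × ι => a p.2) = Fintype.card κ * wtB a := by
  have hfilter : (univ.filter fun p : κ × ι => a p.2 = true)
      = univ ×ˢ univ.filter fun i => a i = true := by
    ext p
    simp [mem_product]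
  rw [wtB, hfilter, card_product, card_univ, wtB]

variable [DecidableEq ι]

lemma affineS_pinS_iff {S : Finset (ι → Bool)} {i : ι} {b : Bool} :
    AffineS (pinS S i b) ↔ (∃ x ∈ S, x i = b) ∧
      ∀ x ∈ S, x i = b → ∀ y ∈ S, y i = b → ∀ z ∈ S, z i = b → xor3 x y z ∈ S := by
  have hxor_at : ∀ {x y z : ι → Bool}, x i = b → y i = b → z i = b → xor3 x y z i = b := by
    intro x y z hx hy hz
    cases b <;> simp [xor3, hx, hy, hz]
  simp only [AffineS, pinS, image_nonempty, filter_nonempty_iff, forall_mem_image, mem_filter,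
    and_imp]
  refine and_congr_right fun _ => ⟨?_, ?_⟩
  · intro hclosed x hx hxi y hy hyi z hz hzi
    obtain ⟨w, hw', hrestrict⟩ := mem_image.1 (hclosed hx hxi hy hyi hz hzi)
    obtain ⟨hw, hwi⟩ := mem_filter.1 hw'
    have hw_eq : w = xor3 x y z := by
      funext j
      by_cases hj : j = i
      · subst hj
        rw [hwi, hxor_at hxi hyi hzi]
      · exact congrFun hrestrict ⟨j, hj⟩
    exact hw_eq ▸ hw
  · intro hclosed x hx hxi y hy hyi z hz hzi
    exact mem_image.2 ⟨xor3 x y z,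
      mem_filter.2 ⟨hclosed x hx hxi y hy hyi z hz hzi, hxor_at hxi hyi hzi⟩, rfl⟩

variable (m : ℕ) {S : Finset (ι → Bool)}

lemma forall_mem_multS {P : (Fin m × ι → Bool) → Prop} :
    (∀ x ∈ multS m S, P x) ↔ ∀ a ∈ S, P fun p => a p.2 :=
  forall_mem_image

lemma exists_mem_multS {P : (Fin m × ι → Bool) → Prop} :
    (∃ x ∈ multS m S, P x) ↔ ∃ a ∈ S, P fun p => a p.2 :=
  exists_mem_image

lemma comp_snd_mem_multS_iff [NeZero m] {a : ι → Bool} :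
    (fun p : Fin m × ι => a p.2) ∈ multS m S ↔ a ∈ S :=
  comp_snd_injective.mem_finset_image

lemma IsEOS.multS (hS : IsEOS S) : IsEOS (multS m S) := by
  rw [IsEOS, forall_mem_multS]
  intro a ha
  rw [wtB_comp_snd, Fintype.card_prod, Fintype.card_fin, mul_left_comm, hS a ha]

lemma affineS_pinS_multS_iff [NeZero m] {p : Fin m × ι} {b : Bool} :
    AffineS (pinS (multS m S) p b) ↔ AffineS (pinS S p.2 b) := by
  simp only [affineS_pinS_iff, exists_mem_multS, forall_mem_multS, xor3_comp_snd,
    comp_snd_mem_multS_iff]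

theorem IsKernelWith.multS [NeZero m] {T : Finset ι}
    (hK : IsKernelWith S T) : IsKernelWith (multS m S) (univ ×ˢ T) := by
  obtain ⟨hS, hEO, hT, hTne, hδ₁, hnonconst, haff⟩ := hK
  have hmem : ∀ p : Fin m × ι, p ∈ univ ×ˢ T ↔ p.2 ∈ T := by simp [mem_product]
  have : Nonempty ι := hT.to_type
  refine ⟨hS.image _, hEO.multS m, univ_nonempty.product hT, ?_, ?_, ?_, ?_⟩
  · simpa [product_eq_univ] using hTne
  · simp only [hmem, forall_mem_multS]
    exact fun p hp a ha => hδ₁ p.2 hp a ha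
  · simp only [hmem, exists_mem_multS]
    exact fun p hp => hnonconst p.2 hp
  · simp only [hmem, affineS_pinS_multS_iff]
    exact fun p hp => haff p.2 hp

end Multiple

theorem stmt8_general {k : ℕ} (S : Finset (Fin (2 ^ k) → Bool)) (T : Finset (Fin (2 ^ k)))
    (hK : IsKernelWith S T) (m : ℕ) (hm : 1 ≤ m) :
    ∃ T' : Finset (Fin m × Fin (2 ^ k)), IsKernelWith (multS m S) T' :=
  have : NeZero m := NeZero.of_pos hm
  ⟨univ ×ˢ T, hK.multS m⟩

theorem stmt8 {k : ℕ} (S : Finset (Fin (2 ^ k) → Bool)) (T : Finset (Fin (2 ^ k)))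
    (hK : IsKernelWith S T) (hbasic : T.card = 1) (m : ℕ) (hm : 1 ≤ m) :
    ∃ T' : Finset (Fin m × Fin (2 ^ k)), IsKernelWith (multS m S) T' :=
  stmt8_general S T hK m hm
end

section
/- The balanced 1-Hadamard code of block length 2^k (k ≥ 3), viewed as a 0-1 valued signature of arity 2^k, is a basic δ₁-affine kernel: it is an EO signature of the form δ₁ ⊗ h with no variable of h constant, and every 0-pinning of h is affine. -/
/-!
Index the rows and columns of `H_{2^k}` by `u, v ∈ 𝔽₂^k`; then `H_{2^k}(u, v) = (-1)^{u·v}`, so the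
codeword of row `u` is the indicator of the hyperplane `u·v = 0`, and the balanced code consists of
these indicators for `u ≠ 0`. Every codeword is `1` at `v = 0`, which is the `δ₁` factor. A codeword
with `u_j = 1` has weight `2^{k-1}` because flipping bit `j` of `v` toggles `u·v`. Since
`u ↦ codeword u` turns `u₁ ⊕ u₂ ⊕ u₃` into `⊕` of the codewords, the whole code is affine, and pinning
a coordinate `v ≠ 0` to `0` removes the all-ones word without leaving the class of affine sets.
For `v ≠ 0` some codeword vanishes at `v`, and as `k ≥ 2` the hyperplane orthogonal to `v` contains a
nonzero `u`, so no coordinate of `h` is constant.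
-/

open Finset

/-- Sylvester's inductive construction of the Hadamard matrix `H_{2^k}`, with rows and
columns indexed by bit strings of length `k`: `H_1 = [1]` and
`H_{2^{k+1}} = [[H_{2^k}, H_{2^k}], [H_{2^k}, -H_{2^k}]]`, the sign `-1` occurring
exactly in the bottom-right block (first bit of both row and column index is 1). -/
def Had : (k : ℕ) → (Fin k → Bool) → (Fin k → Bool) → ℤ
  | 0, _, _ => 1
  | k + 1, u, v =>
      (if u 0 && v 0 then (-1 : ℤ) else 1) * Had k (u ∘ Fin.succ) (v ∘ Fin.succ)

/-- The 1-Hadamard code: rows of `H_{2^k}` with `+1 ↦ 1` and `-1 ↦ 0`. -/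
def Hcode1 (k : ℕ) : Finset ((Fin k → Bool) → Bool) :=
  Finset.univ.image fun u => fun v => decide (Had k u v = 1)

/-- The balanced 1-Hadamard code: the 1-Hadamard code with the all-ones codeword removed. -/
def Hbal1 (k : ℕ) : Finset ((Fin k → Bool) → Bool) :=
  (Hcode1 k).erase fun _ => true

namespace Hadamard

lemma two_mul_wtB_eq_card_of_perm {α : Type*} [Fintype α] {a : α → Bool} (σ : Equiv.Perm α)
    (hσ : ∀ x, a (σ x) = !a x) : 2 * wtB a = Fintype.card α := by
  have hflip : Fintype.card {x // a x = true} = Fintype.card {x // a x = false} :=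
    Fintype.card_congr <| σ.subtypeEquiv fun x => by cases hx : a x <;> simp [hσ, hx]
  have hsplit := card_filter_add_card_filter_not (s := (univ : Finset α)) (fun x => a x = true)
  simp only [Fintype.card_subtype, Bool.not_eq_true] at hflip hsplit
  rw [wtB, two_mul, ← card_univ, ← hsplit, hflip]

section BitVectors

variable {ι : Type*} [Fintype ι]

def bxor (u v : ι → Bool) : ι → Bool := fun i => xor (u i) (v i)

def dotB (u v : ι → Bool) : ZMod 2 := ∑ i, ((u i && v i).toNat : ZMod 2)

lemma dotB_comm (u v : ι → Bool) : dotB u v = dotB v u := by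
  simp only [dotB, Bool.and_comm]

lemma dotB_bxor_left (a b v : ι → Bool) : dotB (bxor a b) v = dotB a v + dotB b v := by
  rw [dotB, dotB, dotB, ← sum_add_distrib]
  refine sum_congr rfl fun i _ => ?_
  rw [bxor]
  cases a i <;> cases b i <;> cases v i <;> decide

lemma dotB_xor3_left (a b c v : ι → Bool) :
    dotB (xor3 a b c) v = dotB a v + dotB b v + dotB c v := by
  rw [add_assoc, ← dotB_bxor_left, ← dotB_bxor_left]
  rfl

lemma dotB_bxor_right (u a b : ι → Bool) : dotB u (bxor a b) = dotB u a + dotB u b := by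
  rw [dotB_comm, dotB_bxor_left, dotB_comm a, dotB_comm b]

lemma dotB_false_right (u : ι → Bool) : dotB u (fun _ => false) = 0 := by
  simp [dotB]

def codeword (u : ι → Bool) : (ι → Bool) → Bool := fun v => decide (dotB u v = 0)

lemma codeword_apply_eq_false_iff {u v : ι → Bool} : codeword u v = false ↔ dotB u v = 1 := by
  rw [codeword, decide_eq_false_iff_not]
  generalize dotB u v = p
  revert p
  decide

lemma codeword_xor3 (a b c : ι → Bool) :
    codeword (xor3 a b c) = xor3 (codeword a) (codeword b) (codeword c) := by
  funext v
  simp only [codeword, xor3, dotB_xor3_left]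
  generalize dotB a v = p, dotB b v = q, dotB c v = r
  revert p q r
  decide

variable [DecidableEq ι]

def basisB (j : ι) : ι → Bool := fun i => decide (i = j)

lemma dotB_basisB_left (j : ι) (v : ι → Bool) : dotB (basisB j) v = (v j).toNat := by
  rw [dotB, Fintype.sum_eq_single j fun i hi => by simp [basisB, hi]]
  simp [basisB]

lemma dotB_basisB_right (u : ι → Bool) (j : ι) : dotB u (basisB j) = (u j).toNat := by
  rw [dotB_comm, dotB_basisB_left]

lemma codeword_eq_const_true_iff {u : ι → Bool} :
    (codeword u = fun _ => true) ↔ ∀ j, u j = false := by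
  constructor
  · intro h j
    have hj := congrFun h (basisB j)
    rw [codeword, dotB_basisB_right] at hj
    cases huj : u j <;> simp_all
  · intro h
    funext v
    simp [codeword, dotB, h]

lemma two_mul_wtB_codeword {u : ι → Bool} {j : ι} (hj : u j = true) :
    2 * wtB (codeword u) = Fintype.card (ι → Bool) := by
  have hinv : Function.Involutive fun v : ι → Bool => bxor v (basisB j) := fun v => by
    funext i
    simp [bxor]
  refine two_mul_wtB_eq_card_of_perm (hinv.toPerm _) fun v => ?_
  simp only [Function.Involutive.coe_toPerm, codeword, dotB_bxor_right, dotB_basisB_right, hj]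
  generalize dotB u v = p
  revert p
  decide

end BitVectors

section Pinning

variable {ι : Type*} [Fintype ι] [DecidableEq ι]

lemma pinS_erase {S : Finset (ι → Bool)} {x : ι → Bool} {i : ι} {a : Bool} (hx : x i ≠ a) :
    pinS (S.erase x) i a = pinS S i a := by
  rw [pinS, pinS, filter_erase, erase_eq_of_notMem]
  simp [hx]

lemma affineS_pinS {S : Finset (ι → Bool)} {i : ι} {a : Bool}
    (hS : ∀ x ∈ S, ∀ y ∈ S, ∀ z ∈ S, xor3 x y z ∈ S) (hne : ∃ x ∈ S, x i = a) :
    AffineS (pinS S i a) := by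
  obtain ⟨x₀, hx₀, hx₀i⟩ := hne
  refine ⟨⟨_, mem_image_of_mem _ (mem_filter.2 ⟨hx₀, hx₀i⟩)⟩, ?_⟩
  simp only [pinS, mem_image, mem_filter]
  rintro _ ⟨x, ⟨hx, hxi⟩, rfl⟩ _ ⟨y, ⟨hy, hyi⟩, rfl⟩ _ ⟨z, ⟨hz, hzi⟩, rfl⟩
  refine ⟨xor3 x y z, ⟨hS x hx y hy z hz, ?_⟩, rfl⟩
  simp only [xor3, hxi, hyi, hzi]
  cases a <;> rfl

end Pinning

variable {k : ℕ}

lemma Had_eq_neg_one_pow (u v : Fin k → Bool) :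
    Had k u v = (-1) ^ ∑ i, (u i && v i).toNat := by
  induction k with
  | zero => simp [Had]
  | succ n ih =>
    rw [Had, ih, Fin.sum_univ_succ, pow_add]
    congr 1
    cases u 0 <;> cases v 0 <;> rfl

lemma Had_eq_one_iff (u v : Fin k → Bool) : Had k u v = 1 ↔ dotB u v = 0 := by
  rw [Had_eq_neg_one_pow, neg_one_pow_eq_one_iff_even (by decide),
    ← ZMod.natCast_eq_zero_iff_even, dotB, Nat.cast_sum]

lemma mem_Hcode1 {x : (Fin k → Bool) → Bool} : x ∈ Hcode1 k ↔ ∃ u, codeword u = x := by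
  simp only [Hcode1, mem_image, mem_univ, true_and, Had_eq_one_iff]
  rfl

lemma mem_Hbal1 {x : (Fin k → Bool) → Bool} :
    x ∈ Hbal1 k ↔ ∃ u, (∃ j, u j = true) ∧ codeword u = x := by
  simp only [Hbal1, mem_erase, mem_Hcode1]
  constructor
  · rintro ⟨hx, u, rfl⟩
    refine ⟨u, ?_, rfl⟩
    by_contra! hu
    exact hx (codeword_eq_const_true_iff.2 fun j => by simpa using hu j)
  · rintro ⟨u, ⟨j, hj⟩, rfl⟩
    exact ⟨fun h => by simp [codeword_eq_const_true_iff.1 h j] at hj, u, rfl⟩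

lemma xor3_mem_Hcode1 :
    ∀ x ∈ Hcode1 k, ∀ y ∈ Hcode1 k, ∀ z ∈ Hcode1 k, xor3 x y z ∈ Hcode1 k := by
  simp only [mem_Hcode1]
  rintro _ ⟨a, rfl⟩ _ ⟨b, rfl⟩ _ ⟨c, rfl⟩
  exact ⟨xor3 a b c, codeword_xor3 a b c⟩

lemma apply_zero_of_mem_Hbal1 {x : (Fin k → Bool) → Bool} (hx : x ∈ Hbal1 k) :
    x (fun _ => false) = true := by
  obtain ⟨u, -, rfl⟩ := mem_Hbal1.1 hx
  simp [codeword, dotB_false_right]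

lemma exists_mem_Hbal1_apply_eq_false {v : Fin k → Bool} (hv : v ≠ fun _ => false) :
    ∃ x ∈ Hbal1 k, x v = false := by
  obtain ⟨j, hj⟩ : ∃ j, v j = true := by simpa [funext_iff] using hv
  refine ⟨codeword (basisB j), mem_Hbal1.2 ⟨_, ⟨j, by simp [basisB]⟩, rfl⟩, ?_⟩
  rw [codeword_apply_eq_false_iff, dotB_basisB_left, hj]
  rfl

lemma exists_mem_Hbal1_apply_eq_true (hk : 2 ≤ k) (v : Fin k → Bool) :
    ∃ x ∈ Hbal1 k, x v = true := by
  -- the dot products of `e_i`, `e_j`, `e_i ⊕ e_j` with `v` are `v_i`, `v_j`, `v_i + v_j`: one is `0`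
  let i : Fin k := ⟨0, by omega⟩
  let j : Fin k := ⟨1, by omega⟩
  have hij : i ≠ j := by simp [i, j, Fin.ext_iff]
  have hval : ∀ u, codeword u v = true ↔ dotB u v = 0 := fun u => decide_eq_true_iff
  by_cases hvi : v i = false
  · exact ⟨_, mem_Hbal1.2 ⟨basisB i, ⟨i, by simp [basisB]⟩, rfl⟩,
      (hval _).2 (by rw [dotB_basisB_left, hvi]; rfl)⟩
  by_cases hvj : v j = false
  · exact ⟨_, mem_Hbal1.2 ⟨basisB j, ⟨j, by simp [basisB]⟩, rfl⟩,
      (hval _).2 (by rw [dotB_basisB_left, hvj]; rfl)⟩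
  simp only [Bool.not_eq_false] at hvi hvj
  refine ⟨_, mem_Hbal1.2 ⟨bxor (basisB i) (basisB j), ⟨i, by simp [bxor, basisB, hij]⟩, rfl⟩,
    (hval _).2 ?_⟩
  rw [dotB_bxor_left, dotB_basisB_left, dotB_basisB_left, hvi, hvj]
  rfl

end Hadamard

open Hadamard

theorem stmt10 {k : ℕ} (hk : 3 ≤ k) :
    ∃ T : Finset (Fin k → Bool), T.card = 1 ∧ IsKernelWith (Hbal1 k) T := by
  have hk2 : 2 ≤ k := by omega
  have : Nonempty (Fin k) := ⟨⟨0, by omega⟩⟩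
  refine ⟨{fun _ => false}, card_singleton _, ?_, ?_, singleton_nonempty _, singleton_ne_univ _,
    ?_, ?_, ?_⟩
  · obtain ⟨x, hx, -⟩ := exists_mem_Hbal1_apply_eq_true hk2 fun _ => false
    exact ⟨x, hx⟩
  · intro x hx
    obtain ⟨u, ⟨j, hj⟩, rfl⟩ := mem_Hbal1.1 hx
    exact two_mul_wtB_codeword hj
  · intro i hi x hx
    rw [mem_singleton.1 hi]
    exact apply_zero_of_mem_Hbal1 hx
  · intro v hv
    exact ⟨exists_mem_Hbal1_apply_eq_false (notMem_singleton.1 hv),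
      exists_mem_Hbal1_apply_eq_true hk2 v⟩
  · intro v hv
    obtain ⟨x, hx, hxv⟩ := exists_mem_Hbal1_apply_eq_false (notMem_singleton.1 hv)
    rw [Hbal1, pinS_erase (by simp)]
    exact affineS_pinS xor3_mem_Hcode1 ⟨x, mem_of_mem_erase hx, hxv⟩
end

section
/- Let f be a real-valued EO signature of arity 2n ≥ 4. Then f satisfies ARS (f(α) = f(ᾱ) for all α) if and only if for all distinct indices i,j, the signature f^{x_i ≠ x_j}, defined by f^{x_i≠x_j}(β) = f_{ij}^{01}(β) + f_{ij}^{10}(β), satisfies ARS. -/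
/-!
Write `g α = f α - f ᾱ`. When `α i ≠ α j`, ARS of `f^{x_i ≠ x_j}` at the restriction of `α`
says exactly `g α + g (α ∘ (i j)) = 0`. For `α` of weight `n ≥ 2` pick `α i = 0` and
`α j = α k = 1` with `j ≠ k`: the transpositions `(i j)`, `(j k)`, `(k i)` applied in turn
bring `α` back to itself while flipping the sign of `g` three times, so `g α = 0`.
Off weight `n`, both `f α` and `f ᾱ` vanish because `f` is EO.
-/

open Finset

/-- Componentwise complement. -/
def cmpl {ι : Type*} (a : ι → Bool) : ι → Bool := fun i => !(a i)

/-- A real-valued EO signature vanishes on all vectors whose weight is not half the arity. -/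
def IsEOR {ι : Type*} [Fintype ι] (f : (ι → Bool) → ℝ) : Prop :=
  ∀ a, 2 * wtB a ≠ Fintype.card ι → f a = 0

/-- Arrow reversal symmetry. -/
def ARS {ι : Type*} (f : (ι → Bool) → ℝ) : Prop := ∀ a, f a = f (cmpl a)

/-- Minus arrow reversal symmetry. -/
def NegARS {ι : Type*} (f : (ι → Bool) → ℝ) : Prop := ∀ a, f a = - f (cmpl a)

/-- Extend an assignment on the variables other than `i, j` by `x_i = a`, `x_j = b`. -/
def extIJ {N : ℕ} (i j : Fin N) (a b : Bool)
    (β : {l : Fin N // l ≠ i ∧ l ≠ j} → Bool) : Fin N → Bool :=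
  fun l => if h1 : l = i then a else if h2 : l = j then b else β ⟨l, h1, h2⟩

/-- `f^{x_i ≠ x_j} = f_{ij}^{01} + f_{ij}^{10}`. -/
def neqP {N : ℕ} (f : (Fin N → Bool) → ℝ) (i j : Fin N) :
    ({l : Fin N // l ≠ i ∧ l ≠ j} → Bool) → ℝ :=
  fun β => f (extIJ i j false true β) + f (extIJ i j true false β)

/-- `f^{x_i ≠⁻ x_j} = f_{ij}^{01} - f_{ij}^{10}`. -/
def neqM {N : ℕ} (f : (Fin N → Bool) → ℝ) (i j : Fin N) :
    ({l : Fin N // l ≠ i ∧ l ≠ j} → Bool) → ℝ :=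
  fun β => f (extIJ i j false true β) - f (extIJ i j true false β)

lemma wtB_add_wtB_cmpl {ι : Type*} [Fintype ι] (a : ι → Bool) :
    wtB a + wtB (cmpl a) = Fintype.card ι := by
  simpa [wtB, cmpl] using Finset.card_filter_add_card_filter_not (s := univ) (a · = true)

lemma cmpl_extIJ {N : ℕ} (i j : Fin N) (a b : Bool)
    (β : {l : Fin N // l ≠ i ∧ l ≠ j} → Bool) :
    cmpl (extIJ i j a b β) = extIJ i j (!a) (!b) (cmpl β) := by
  funext l
  simp only [cmpl, extIJ]
  split_ifs <;> rfl

lemma extIJ_restrict {N : ℕ} (i j : Fin N) (α : Fin N → Bool) :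
    extIJ i j (α i) (α j) (α ∘ Subtype.val) = α := by
  funext l
  simp only [extIJ, Function.comp_apply]
  split_ifs with h1 h2
  · rw [h1]
  · rw [h2]
  · rfl

lemma extIJ_restrict_swap {N : ℕ} (i j : Fin N) (α : Fin N → Bool) :
    extIJ i j (α j) (α i) (α ∘ Subtype.val) = α ∘ Equiv.swap i j := by
  have hres : (α ∘ Equiv.swap i j) ∘ (Subtype.val : {l : Fin N // l ≠ i ∧ l ≠ j} → Fin N)
      = α ∘ Subtype.val := by
    funext l
    simp [Equiv.swap_apply_of_ne_of_ne l.2.1 l.2.2]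
  simpa [hres] using extIJ_restrict i j (α ∘ Equiv.swap i j)

lemma neqP_restrict {N : ℕ} (f : (Fin N → Bool) → ℝ) {i j : Fin N} {α : Fin N → Bool}
    (h : α i ≠ α j) : neqP f i j (α ∘ Subtype.val) = f α + f (α ∘ Equiv.swap i j) := by
  have h₁ := extIJ_restrict i j α
  have h₂ := extIJ_restrict_swap i j α
  cases hi : α i <;> cases hj : α j <;> simp only [hi, hj] at h h₁ h₂
  all_goals first | exact absurd rfl h | simp only [neqP, h₁, h₂, add_comm]

lemma ARS.neqP {N : ℕ} {f : (Fin N → Bool) → ℝ} (hf : ARS f) (i j : Fin N) :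
    ARS (neqP f i j) := by
  intro β
  simp only [_root_.neqP]
  rw [hf (extIJ i j false true β), hf (extIJ i j true false β), cmpl_extIJ, cmpl_extIJ,
    Bool.not_false, Bool.not_true, add_comm]

def arsDefect {ι : Type*} (f : (ι → Bool) → ℝ) (α : ι → Bool) : ℝ :=
  f α - f (cmpl α)

lemma arsDefect_swap_of_ARS_neqP {N : ℕ} {f : (Fin N → Bool) → ℝ} {i j : Fin N}
    (h : ARS (neqP f i j)) {α : Fin N → Bool} (hij : α i ≠ α j) :
    arsDefect f (α ∘ Equiv.swap i j) = -arsDefect f α := by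
  have hc : cmpl α i ≠ cmpl α j := by simpa [cmpl] using hij
  have := h (α ∘ Subtype.val)
  rw [show cmpl (α ∘ Subtype.val) = cmpl α ∘ Subtype.val from rfl,
    neqP_restrict f hij, neqP_restrict f hc] at this
  simp only [arsDefect]
  change _ - f (cmpl α ∘ Equiv.swap i j) = _
  linarith

lemma eq_zero_of_swap_antisymm {ι : Type*} [DecidableEq ι] {g : (ι → Bool) → ℝ}
    (hg : ∀ i j α, i ≠ j → α i ≠ α j → g (α ∘ Equiv.swap i j) = -g α)
    {α : ι → Bool} {i j k : ι} (hij : α i ≠ α j) (hjk : α j = α k) (hne : j ≠ k) :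
    g α = 0 := by
  have hi_j : i ≠ j := fun h => hij (h ▸ rfl)
  have hi_k : i ≠ k := fun h => hij (h ▸ hjk.symm)
  set β := α ∘ Equiv.swap i j
  set γ := β ∘ Equiv.swap j k
  have hβ : β j ≠ β k := by
    simpa [β, Equiv.swap_apply_of_ne_of_ne hi_k.symm hne.symm, ← hjk] using hij
  have hγ : γ k ≠ γ i := by
    simpa [γ, β, Equiv.swap_apply_of_ne_of_ne hi_j hi_k] using hij
  have hcycle : γ ∘ Equiv.swap k i = α := by
    funext l
    simp only [γ, β, Function.comp_apply, Equiv.swap_apply_def]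
    split_ifs <;> subst_vars <;> simp_all
  have := hg k i γ hi_k.symm hγ
  rw [hcycle, hg j k β hne hβ, hg i j α hi_j hij] at this
  linarith

lemma exists_false_and_two_true {ι : Type*} [Fintype ι] {α : ι → Bool}
    (hlt : wtB α < Fintype.card ι) (htwo : 2 ≤ wtB α) :
    ∃ i j k, α i = false ∧ α j = true ∧ α k = true ∧ j ≠ k := by
  obtain ⟨i, hi⟩ : ∃ i, α i = false := by
    by_contra! h
    have : wtB α = Fintype.card ι := by
      simp [wtB, h, Finset.filter_true_of_mem]
    omega
  obtain ⟨j, hj, k, hk, hjk⟩ := Finset.one_lt_card.mp htwo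
  exact ⟨i, j, k, hi, (Finset.mem_filter.mp hj).2, (Finset.mem_filter.mp hk).2, hjk⟩

theorem stmt13 {n : ℕ} (hn : 2 ≤ n) (f : (Fin (2 * n) → Bool) → ℝ)
    (hEO : IsEOR f) :
    ARS f ↔ ∀ i j : Fin (2 * n), i ≠ j → ARS (neqP f i j) := by
  refine ⟨fun hf i j _ => hf.neqP i j, fun h α => sub_eq_zero.mp ?_⟩
  have hcard : wtB α + wtB (cmpl α) = 2 * n := by simpa using wtB_add_wtB_cmpl α
  by_cases hw : wtB α = n
  · obtain ⟨i, j, k, hi, hj, hk, hjk⟩ :=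
      exists_false_and_two_true (α := α) (by simp; omega) (by omega)
    have hanti : ∀ i j α, i ≠ j → α i ≠ α j →
        arsDefect f (α ∘ Equiv.swap i j) = -arsDefect f α :=
      fun i j _ hij => arsDefect_swap_of_ARS_neqP (h i j hij)
    exact eq_zero_of_swap_antisymm hanti (by rw [hi, hj]; decide) (hj.trans hk.symm) hjk
  · rw [hEO α (by simp; omega), hEO (cmpl α) (by simp; omega), sub_zero]
end

section
/- Let f be a real-valued EO signature of arity 2n ≥ 4. If for every pair of distinct indices i,j, both f^{x_i≠x_j} = f_{ij}^{01} + f_{ij}^{10} and f^{x_i≠⁻x_j} = f_{ij}^{01} − f_{ij}^{10} each satisfy ARS or -ARS, then f itself satisfies ARS or -ARS. -/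
open Finset

/-!
Put `oddPart f α = f α - f ᾱ` and `evenPart f α = f α + f ᾱ`; we show that one of them vanishes
identically. For `α` with `α i ≠ α j`, pinning `x_i, x_j` turns each of the two pair hypotheses
into a statement about `α` and `α ∘ swap i j`: one of the two parts changes sign, or stays
fixed, under this swap. Hence `oddPart f * evenPart f` changes sign under every such swap, and a
cycle of three swaps through `α` (available when `α` has weight `n ≥ 2`) forces it to vanish at
`α`. Furthermore, for every pair either `|oddPart f|` is invariant under the swap or `evenPart f`
vanishes wherever `x_i ≠ x_j`. Walking from a point where `oddPart f ≠ 0` to a point where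
`evenPart f ≠ 0` by swaps that reduce their Hamming distance keeps `oddPart f` nonzero, so both
parts would be nonzero at one point: impossible.
-/

open Equiv

theorem Bool.eq_false_and_eq_true_or_of_ne {a b : Bool} (h : a ≠ b) :
    a = false ∧ b = true ∨ a = true ∧ b = false := by
  cases a <;> cases b <;> simp_all

section Swaps

variable {ι β : Type*} [DecidableEq ι]

theorem comp_swap_triangle {α : ι → β} {i j k : ι} (hik : i ≠ k) (hαik : α i = α k)
    (hαij : α i ≠ α j) : α ∘ swap i j ∘ swap k i ∘ swap j k = α := by
  funext l
  simp only [Function.comp_apply, swap_apply_def]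
  split_ifs <;> grind

theorem eq_zero_of_comp_swap_eq_neg {Q : (ι → β) → ℝ}
    (hQ : ∀ α i j, α i ≠ α j → Q (α ∘ swap i j) = -Q α) {α : ι → β} {i j k : ι}
    (hik : i ≠ k) (hαik : α i = α k) (hαij : α i ≠ α j) : Q α = 0 := by
  have hjk : j ≠ k := by rintro rfl; exact hαij hαik
  have h₁ := hQ α i j hαij
  have h₂ := hQ (α ∘ swap i j) k i (by simp [swap_apply_of_ne_of_ne hik.symm hjk.symm]; grind)
  have h₃ := hQ ((α ∘ swap i j) ∘ swap k i) j k (by simp; grind)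
  rw [show ((α ∘ swap i j) ∘ swap k i) ∘ swap j k = α from
    comp_swap_triangle hik hαik hαij] at h₃
  linarith

theorem hammingDist_comp_swap_lt [Fintype ι] [DecidableEq β] {α γ : ι → β} {i j : ι}
    (hαγ : α i ≠ γ i) (hi : α j = γ i) (hj : α i = γ j) :
    hammingDist (α ∘ swap i j) γ < hammingDist α γ := by
  apply Finset.card_lt_card
  rw [Finset.ssubset_iff_of_subset]
  · exact ⟨i, by simpa using hαγ, by simpa using hi⟩
  · intro l hl
    simp only [Finset.mem_filter, Finset.mem_univ, true_and, Function.comp_apply] at hl ⊢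
    by_cases hli : l = i
    · subst hli; exact hαγ
    by_cases hlj : l = j
    · subst hlj; simp [hj] at hl
    · rwa [swap_apply_of_ne_of_ne hli hlj] at hl

end Swaps

theorem cmpl_comp {ι κ : Type*} (α : ι → Bool) (g : κ → ι) : cmpl (α ∘ g) = cmpl α ∘ g := rfl

section Weight

variable {ι : Type*} [Fintype ι]

theorem wtB_cmpl_add_wtB (α : ι → Bool) : wtB (cmpl α) + wtB α = Fintype.card ι := by
  rw [← Finset.card_univ, ← Finset.card_filter_add_card_filter_not (p := fun i => α i = false)]
  simp [wtB, cmpl]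

theorem exists_eq_true_and_eq_false_of_wtB_le {α γ : ι → Bool} (hw : wtB γ ≤ wtB α)
    (hne : α ≠ γ) : ∃ i, α i = true ∧ γ i = false := by
  by_contra! h
  have hsub : ({i | α i = true} : Finset ι) ⊆ ({i | γ i = true} : Finset ι) := fun i hi => by
    simpa using h i (by simpa using hi)
  have heq := Finset.eq_of_subset_of_card_le hsub hw
  refine hne (funext fun i => Bool.eq_iff_iff.mpr ?_)
  simpa using congrArg (i ∈ ·) heq

variable [DecidableEq ι]

theorem eq_zero_of_comp_swap_eq_neg_of_wtB {Q : (ι → Bool) → ℝ}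
    (hQ : ∀ α i j, α i ≠ α j → Q (α ∘ swap i j) = -Q α)
    {α : ι → Bool} (h₁ : 1 ≤ wtB α) (h₂ : 2 ≤ wtB (cmpl α)) : Q α = 0 := by
  obtain ⟨i, hi, k, hk, hik⟩ := Finset.one_lt_card.mp h₂
  obtain ⟨j, hj⟩ := Finset.card_pos.mp h₁
  simp only [cmpl, Finset.mem_filter, Finset.mem_univ, true_and, Bool.not_eq_eq_eq_not,
    Bool.not_true] at hi hk hj
  exact eq_zero_of_comp_swap_eq_neg (j := j) hQ hik (hi.trans hk.symm) (by simp [hi, hj])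

theorem mul_eq_zero_of_abs_comp_swap_or_eq_zero {A B : (ι → Bool) → ℝ}
    (hw : ∀ α γ, A α ≠ 0 → B γ ≠ 0 → wtB α = wtB γ) (hAB : ∀ α, A α * B α = 0)
    (hswap : ∀ i j, i ≠ j → (∀ α : ι → Bool, α i ≠ α j → |A (α ∘ swap i j)| = |A α|) ∨
      (∀ α : ι → Bool, α i ≠ α j → B α = 0))
    (α γ : ι → Bool) : A α * B γ = 0 := by
  induction hd : hammingDist α γ using Nat.strong_induction_on generalizing α with
  | _ d ih =>
  by_contra hne
  obtain ⟨hAα, hBγ⟩ := mul_ne_zero_iff.mp hne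
  have hwαγ := hw α γ hAα hBγ
  have hαγ : α ≠ γ := by rintro rfl; exact hne (hAB α)
  obtain ⟨i, hαi, hγi⟩ := exists_eq_true_and_eq_false_of_wtB_le hwαγ.ge hαγ
  obtain ⟨j, hγj, hαj⟩ := exists_eq_true_and_eq_false_of_wtB_le hwαγ.le hαγ.symm
  have hij : i ≠ j := by rintro rfl; simp_all
  rcases hswap i j hij with hA | hB
  · have hlt : hammingDist (α ∘ swap i j) γ < d :=
      hd ▸ hammingDist_comp_swap_lt (by simp [hαi, hγi]) (by simp [hαj, hγi])
        (by simp [hαi, hγj])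
    have hAα' : A (α ∘ swap i j) ≠ 0 := by
      rw [← abs_ne_zero, hA α (by simp [hαi, hαj])]
      exact abs_ne_zero.mpr hAα
    exact mul_ne_zero hAα' hBγ (ih _ hlt _ rfl)
  · exact hBγ (hB γ (by simp [hγi, hγj]))

end Weight

section Parts

variable {ι : Type*} {f : (ι → Bool) → ℝ}

def oddPart (f : (ι → Bool) → ℝ) (α : ι → Bool) : ℝ := f α - f (cmpl α)

def evenPart (f : (ι → Bool) → ℝ) (α : ι → Bool) : ℝ := f α + f (cmpl α)

theorem ARS_of_forall_oddPart_eq_zero (h : ∀ α, oddPart f α = 0) : ARS f :=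
  fun α => sub_eq_zero.mp (h α)

theorem NegARS_of_forall_evenPart_eq_zero (h : ∀ α, evenPart f α = 0) : NegARS f :=
  fun α => eq_neg_of_add_eq_zero_left (h α)

variable [Fintype ι]

theorem IsEOR.apply_cmpl_eq_zero (hf : IsEOR f) {α : ι → Bool}
    (hα : 2 * wtB α ≠ Fintype.card ι) : f (cmpl α) = 0 :=
  hf _ fun h => hα (by have := wtB_cmpl_add_wtB α; omega)

theorem IsEOR.oddPart_eq_zero (hf : IsEOR f) {α : ι → Bool}
    (hα : 2 * wtB α ≠ Fintype.card ι) : oddPart f α = 0 := by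
  simp [oddPart, hf α hα, hf.apply_cmpl_eq_zero hα]

theorem IsEOR.evenPart_eq_zero (hf : IsEOR f) {α : ι → Bool}
    (hα : 2 * wtB α ≠ Fintype.card ι) : evenPart f α = 0 := by
  simp [evenPart, hf α hα, hf.apply_cmpl_eq_zero hα]

theorem IsEOR.two_mul_wtB_of_oddPart_ne_zero (hf : IsEOR f) {α : ι → Bool}
    (h : oddPart f α ≠ 0) : 2 * wtB α = Fintype.card ι :=
  by_contra fun hα => h (hf.oddPart_eq_zero hα)

theorem IsEOR.two_mul_wtB_of_evenPart_ne_zero (hf : IsEOR f) {α : ι → Bool}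
    (h : evenPart f α ≠ 0) : 2 * wtB α = Fintype.card ι :=
  by_contra fun hα => h (hf.evenPart_eq_zero hα)

end Parts

section Pinning

variable {N : ℕ} {f : (Fin N → Bool) → ℝ} {i j : Fin N} {α : Fin N → Bool}

theorem extIJ_comp_val {a b : Bool} (ha : α i = a) (hb : α j = b) :
    extIJ i j a b (α ∘ Subtype.val) = α := by
  subst ha hb
  funext l
  unfold extIJ
  split_ifs with hi hj
  · rw [hi]
  · rw [hj]
  · rfl

theorem extIJ_comp_val_swap {a b : Bool} (ha : α i = a) (hb : α j = b) :
    extIJ i j b a (α ∘ Subtype.val) = α ∘ swap i j := by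
  have hval : (α ∘ swap i j) ∘ Subtype.val = α ∘ (Subtype.val : {l // l ≠ i ∧ l ≠ j} → _) :=
    funext fun l => by simp [swap_apply_of_ne_of_ne l.2.1 l.2.2]
  rw [← hval]
  exact extIJ_comp_val (by simpa using hb) (by simpa using ha)

theorem neqP_comp_val (hα : α i ≠ α j) :
    neqP f i j (α ∘ Subtype.val) = f α + f (α ∘ swap i j) := by
  rcases Bool.eq_false_and_eq_true_or_of_ne hα with ⟨hi, hj⟩ | ⟨hi, hj⟩
  · simp only [neqP, extIJ_comp_val hi hj, extIJ_comp_val_swap hi hj]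
  · simp only [neqP, extIJ_comp_val hi hj, extIJ_comp_val_swap hi hj, add_comm]

theorem neqM_comp_val_of_false_true (hi : α i = false) (hj : α j = true) :
    neqM f i j (α ∘ Subtype.val) = f α - f (α ∘ swap i j) := by
  simp only [neqM, extIJ_comp_val hi hj, extIJ_comp_val_swap hi hj]

theorem neqM_comp_val_of_true_false (hi : α i = true) (hj : α j = false) :
    neqM f i j (α ∘ Subtype.val) = f (α ∘ swap i j) - f α := by
  simp only [neqM, extIJ_comp_val hi hj, extIJ_comp_val_swap hi hj]

theorem cmpl_ne_cmpl (hα : α i ≠ α j) : cmpl α i ≠ cmpl α j := by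
  simpa [cmpl] using hα

theorem oddPart_comp_swap_of_ARS_neqP (h : ARS (neqP f i j)) (hα : α i ≠ α j) :
    oddPart f (α ∘ swap i j) = -oddPart f α := by
  have e := h (α ∘ Subtype.val)
  rw [cmpl_comp, neqP_comp_val hα, neqP_comp_val (cmpl_ne_cmpl hα)] at e
  simp only [oddPart, cmpl_comp]
  linarith

theorem evenPart_comp_swap_of_NegARS_neqP (h : NegARS (neqP f i j)) (hα : α i ≠ α j) :
    evenPart f (α ∘ swap i j) = -evenPart f α := by
  have e := h (α ∘ Subtype.val)
  rw [cmpl_comp, neqP_comp_val hα, neqP_comp_val (cmpl_ne_cmpl hα)] at e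
  simp only [evenPart, cmpl_comp]
  linarith

theorem evenPart_comp_swap_of_ARS_neqM (h : ARS (neqM f i j)) (hα : α i ≠ α j) :
    evenPart f (α ∘ swap i j) = evenPart f α := by
  have e := h (α ∘ Subtype.val)
  simp only [evenPart, cmpl_comp] at e ⊢
  rcases Bool.eq_false_and_eq_true_or_of_ne hα with ⟨hi, hj⟩ | ⟨hi, hj⟩
  · rw [neqM_comp_val_of_false_true hi hj,
      neqM_comp_val_of_true_false (by simp [cmpl, hi]) (by simp [cmpl, hj])] at e
    linarith
  · rw [neqM_comp_val_of_true_false hi hj,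
      neqM_comp_val_of_false_true (by simp [cmpl, hi]) (by simp [cmpl, hj])] at e
    linarith

theorem oddPart_comp_swap_of_NegARS_neqM (h : NegARS (neqM f i j)) (hα : α i ≠ α j) :
    oddPart f (α ∘ swap i j) = oddPart f α := by
  have e := h (α ∘ Subtype.val)
  simp only [oddPart, cmpl_comp] at e ⊢
  rcases Bool.eq_false_and_eq_true_or_of_ne hα with ⟨hi, hj⟩ | ⟨hi, hj⟩
  · rw [neqM_comp_val_of_false_true hi hj,
      neqM_comp_val_of_true_false (by simp [cmpl, hi]) (by simp [cmpl, hj])] at e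
    linarith
  · rw [neqM_comp_val_of_true_false hi hj,
      neqM_comp_val_of_false_true (by simp [cmpl, hi]) (by simp [cmpl, hj])] at e
    linarith

theorem oddPart_mul_evenPart_comp_swap (hP : ARS (neqP f i j) ∨ NegARS (neqP f i j))
    (hM : ARS (neqM f i j) ∨ NegARS (neqM f i j)) (hα : α i ≠ α j) :
    oddPart f (α ∘ swap i j) * evenPart f (α ∘ swap i j) = -(oddPart f α * evenPart f α) := by
  rcases hP with hP | hP <;> rcases hM with hM | hM
  · rw [oddPart_comp_swap_of_ARS_neqP hP hα, evenPart_comp_swap_of_ARS_neqM hM hα]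
    ring
  · have h₁ := oddPart_comp_swap_of_ARS_neqP hP hα
    have h₂ := oddPart_comp_swap_of_NegARS_neqM hM hα
    rw [show oddPart f α = 0 by linarith, show oddPart f (α ∘ swap i j) = 0 by linarith]
    ring
  · have h₁ := evenPart_comp_swap_of_NegARS_neqP hP hα
    have h₂ := evenPart_comp_swap_of_ARS_neqM hM hα
    rw [show evenPart f α = 0 by linarith, show evenPart f (α ∘ swap i j) = 0 by linarith]
    ring
  · rw [evenPart_comp_swap_of_NegARS_neqP hP hα, oddPart_comp_swap_of_NegARS_neqM hM hα]
    ring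

theorem abs_oddPart_comp_swap_or_evenPart_eq_zero
    (hP : ARS (neqP f i j) ∨ NegARS (neqP f i j)) (hM : ARS (neqM f i j) ∨ NegARS (neqM f i j)) :
    (∀ α : Fin N → Bool, α i ≠ α j → |oddPart f (α ∘ swap i j)| = |oddPart f α|) ∨
      (∀ α : Fin N → Bool, α i ≠ α j → evenPart f α = 0) := by
  rcases hP with hP | hP
  · exact .inl fun α hα => by rw [oddPart_comp_swap_of_ARS_neqP hP hα, abs_neg]
  rcases hM with hM | hM
  · refine .inr fun α hα => ?_
    have h₁ := evenPart_comp_swap_of_NegARS_neqP hP hα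
    have h₂ := evenPart_comp_swap_of_ARS_neqM hM hα
    linarith
  · exact .inl fun α hα => by rw [oddPart_comp_swap_of_NegARS_neqM hM hα]

end Pinning

theorem oddPart_mul_evenPart_eq_zero {N : ℕ} (hN : 4 ≤ N) {f : (Fin N → Bool) → ℝ}
    (hf : IsEOR f)
    (hP : ∀ i j : Fin N, i ≠ j → ARS (neqP f i j) ∨ NegARS (neqP f i j))
    (hM : ∀ i j : Fin N, i ≠ j → ARS (neqM f i j) ∨ NegARS (neqM f i j))
    (α : Fin N → Bool) : oddPart f α * evenPart f α = 0 := by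
  by_cases hα : 2 * wtB α = Fintype.card (Fin N)
  · have hcmpl := wtB_cmpl_add_wtB α
    rw [Fintype.card_fin] at hα hcmpl
    refine eq_zero_of_comp_swap_eq_neg_of_wtB (Q := fun α => oddPart f α * evenPart f α)
      (fun β i j hβ => ?_) (by omega) (by omega)
    have hij := ne_of_apply_ne β hβ
    exact oddPart_mul_evenPart_comp_swap (hP i j hij) (hM i j hij) hβ
  · rw [hf.oddPart_eq_zero hα, zero_mul]

theorem stmt15 {n : ℕ} (hn : 2 ≤ n) (f : (Fin (2 * n) → Bool) → ℝ)
    (hEO : IsEOR f)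
    (hP : ∀ i j : Fin (2 * n), i ≠ j → ARS (neqP f i j) ∨ NegARS (neqP f i j))
    (hM : ∀ i j : Fin (2 * n), i ≠ j → ARS (neqM f i j) ∨ NegARS (neqM f i j)) :
    ARS f ∨ NegARS f := by
  have hsep := mul_eq_zero_of_abs_comp_swap_or_eq_zero
    (fun α γ hα hγ => by
      have := hEO.two_mul_wtB_of_oddPart_ne_zero hα
      have := hEO.two_mul_wtB_of_evenPart_ne_zero hγ
      omega)
    (oddPart_mul_evenPart_eq_zero (by omega) hEO hP hM)
    fun i j hij => abs_oddPart_comp_swap_or_evenPart_eq_zero (hP i j hij) (hM i j hij)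
  by_cases h : ∀ α, oddPart f α = 0
  · exact .inl (ARS_of_forall_oddPart_eq_zero h)
  · obtain ⟨α, hα⟩ := not_forall.mp h
    exact .inr (NegARS_of_forall_evenPart_eq_zero fun γ =>
      (mul_eq_zero.mp (hsep α γ)).resolve_left hα)
end
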